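/- Let S1 = {(0,0),(0,1),(0,2),(0,3),(1,1),(1,2),(1,3),(2,2),(3,2)} and S5 = {(0,0),(0,1),(0,2),(0,3),(1,1),(1,2),(2,2),(3,1),(3,2)}. Then for every S ∈ {S1, S5} and every n ≥ 2, the number of π ∈ S_n with occ((123,S),π)=0 and occ((132,S),π)=0 equals 2·(n−1)!. -/

import Mathlib

/-- The boundary-extended sequence of positions of a candidate occurrence:
`posExt i 0 = 0`, `posExt i a = i (a-1) + 1` (1-based position) for `1 ≤ a ≤ m`,
and `posExt i (m+1) = n + 1`. -/
def posExt {m n : ℕ} (i : Fin m → Fin n) : ℕ → ℕ := fun a =>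
  if h : 1 ≤ a ∧ a ≤ m then ((i ⟨a - 1, by omega⟩ : Fin n) : ℕ) + 1
  else if a = 0 then 0 else n + 1

/-- The boundary-extended increasing rearrangement of the values of a candidate
occurrence: `valExt τ π i 0 = 0`, `valExt τ π i b = π (i (τ⁻¹ (b-1))) + 1`
(the `b`-th smallest value, 1-based) for `1 ≤ b ≤ m`, and `valExt τ π i (m+1) = n + 1`. -/
def valExt {m n : ℕ} (τ : Equiv.Perm (Fin m)) (π : Equiv.Perm (Fin n))
    (i : Fin m → Fin n) : ℕ → ℕ := fun b =>
  if h : 1 ≤ b ∧ b ≤ m then ((π (i (τ.symm ⟨b - 1, by omega⟩)) : Fin n) : ℕ) + 1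
  else if b = 0 then 0 else n + 1

/-- `i : Fin m → Fin n` is an occurrence of the mesh pattern `(τ, R)` in the
permutation `π` of `{1, …, n}` (positions and values are taken 1-based via `+1`). -/
def IsMeshOcc {m n : ℕ} (τ : Equiv.Perm (Fin m)) (R : Set (ℕ × ℕ))
    (π : Equiv.Perm (Fin n)) (i : Fin m → Fin n) : Prop :=
  StrictMono i ∧
  (∀ a b : Fin m, π (i a) < π (i b) ↔ τ a < τ b) ∧
  ∀ a b : ℕ, (a, b) ∈ R →
    ¬ ∃ j : Fin n,
        posExt i a < (j : ℕ) + 1 ∧ (j : ℕ) + 1 < posExt i (a + 1) ∧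
        valExt τ π i b < ((π j : Fin n) : ℕ) + 1 ∧
        ((π j : Fin n) : ℕ) + 1 < valExt τ π i (b + 1)

/-- The number of occurrences of the mesh pattern `(τ, R)` in `π`. -/
noncomputable def occ {m n : ℕ} (τ : Equiv.Perm (Fin m)) (R : Set (ℕ × ℕ))
    (π : Equiv.Perm (Fin n)) : ℕ :=
  Nat.card {i : Fin m → Fin n // IsMeshOcc τ R π i}

/-- Mesh patterns `(τ₁, R₁)` and `(τ₂, R₂)` are jointly equidistributed. -/
def JointlyEquidistributed {m₁ m₂ : ℕ} (τ₁ : Equiv.Perm (Fin m₁)) (R₁ : Set (ℕ × ℕ))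
    (τ₂ : Equiv.Perm (Fin m₂)) (R₂ : Set (ℕ × ℕ)) : Prop :=
  ∀ n k ℓ : ℕ,
    Nat.card {π : Equiv.Perm (Fin n) // occ τ₁ R₁ π = k ∧ occ τ₂ R₂ π = ℓ} =
    Nat.card {π : Equiv.Perm (Fin n) // occ τ₁ R₁ π = ℓ ∧ occ τ₂ R₂ π = k}

/-- The pattern 123 (identity on three letters). -/
def perm123 : Equiv.Perm (Fin 3) := 1

/-- The pattern 132 (0-indexed: `0 ↦ 0`, `1 ↦ 2`, `2 ↦ 1`). -/
def perm132 : Equiv.Perm (Fin 3) := Equiv.swap 1 2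

/-- The pattern 12 (identity on two letters). -/
def perm12 : Equiv.Perm (Fin 2) := 1

/-- The pattern 21. -/
def perm21 : Equiv.Perm (Fin 2) := Equiv.swap 0 1

/-- The unsigned Stirling numbers of the first kind. -/
def stirlingFirst : ℕ → ℕ → ℕ
  | 0, 0 => 1
  | 0, _ + 1 => 0
  | _ + 1, 0 => 0
  | n + 1, k + 1 => n * stirlingFirst n (k + 1) + stirlingFirst n k

def S1 : Set (ℕ × ℕ) := ({(0, 0), (0, 1), (0, 2), (0, 3), (1, 1), (1, 2), (1, 3), (2, 2), (3, 2)} : Set (ℕ × ℕ))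
def S5 : Set (ℕ × ℕ) := ({(0, 0), (0, 1), (0, 2), (0, 3), (1, 1), (1, 2), (2, 2), (3, 1), (3, 2)} : Set (ℕ × ℕ))

/-! An occurrence of `123` or `132` starts with its smallest letter. Both `S1` and `S5` shade the
whole column left of the first point, so every occurrence starts at `π(1)` and needs two larger
entries after it: no occurrence exists when `π(1)` is one of the two largest values.

Conversely, if `π(1) = x ≤ n - 2`, an occurrence is built from `π(1)` and two entries above it.
For `S5` take the entries `x + 1` and `x + 2`: every other shaded box of `S5` lies in row 1 or 2,
which are empty because the three values are consecutive. For `S1` take the leftmost entry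
`y > x` and then `x + 2` (if `y = x + 1`) or `y - 1`: everything between `π(1)` and `y` lies
below `x`, and the two largest values are consecutive, which empties every box of `S1`.
Hence the avoiders are the `2 (n - 1)!` permutations with `π(1) ∈ {n - 1, n}`. -/

open Equiv Nat

section LengthThree

variable {n : ℕ}

lemma posExt_fin_three (i : Fin 3 → Fin n) :
    posExt i 0 = 0 ∧ posExt i 1 = i 0 + 1 ∧ posExt i 2 = i 1 + 1 ∧
      posExt i 3 = i 2 + 1 ∧ posExt i 4 = n + 1 := by
  refine ⟨?_, ?_, ?_, ?_, ?_⟩ <;> simp [posExt]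

lemma valExt_fin_three (τ : Perm (Fin 3)) (π : Perm (Fin n)) (i : Fin 3 → Fin n) :
    valExt τ π i 0 = 0 ∧ valExt τ π i 1 = π (i (τ.symm 0)) + 1 ∧
      valExt τ π i 2 = π (i (τ.symm 1)) + 1 ∧ valExt τ π i 3 = π (i (τ.symm 2)) + 1 ∧
      valExt τ π i 4 = n + 1 := by
  refine ⟨?_, ?_, ?_, ?_, ?_⟩ <;> simp [valExt]

lemma apply_lt_apply_iff_of_strictMono {m : ℕ} {τ : Perm (Fin m)} {π : Perm (Fin n)}
    {i : Fin m → Fin n} (h : StrictMono (π ∘ i ∘ τ.symm)) (a b : Fin m) :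
    π (i a) < π (i b) ↔ τ a < τ b := by
  simpa using h.lt_iff_lt (a := τ a) (b := τ b)

lemma strictMono_fin_three {α : Type*} [Preorder α] {f : Fin 3 → α} (h01 : f 0 < f 1)
    (h12 : f 1 < f 2) : StrictMono f :=
  Fin.strictMono_iff_lt_succ.2 fun k => by fin_cases k <;> assumption

lemma apply_symm_lt_apply_symm {τ : Perm (Fin 3)} {π : Perm (Fin n)} {i : Fin 3 → Fin n}
    (hord : ∀ a b, π (i a) < π (i b) ↔ τ a < τ b) {k l : Fin 3} (hkl : k < l) :
    (π (i (τ.symm k)) : ℕ) < π (i (τ.symm l)) :=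
  (hord _ _).2 (by simpa using hkl)

variable {τ : Perm (Fin 3)} {R : Set (ℕ × ℕ)} {π : Perm (Fin (n + 1))}
  {i : Fin 3 → Fin (n + 1)}

lemma IsMeshOcc.apply_zero_eq_zero (hR : ∀ b ≤ 3, (0, b) ∈ R) (h : IsMeshOcc τ R π i) :
    i 0 = 0 := by
  obtain ⟨hmono, hord, hmesh⟩ := h
  by_contra h0
  have hne : ∀ c, (π 0 : ℕ) ≠ π (i c) := fun c hc =>
    h0 (le_antisymm ((hmono.monotone (Fin.zero_le c)).trans
      (π.injective (Fin.ext hc)).ge) (Fin.zero_le _))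
  have hpos : 0 < (i 0 : ℕ) := Fin.pos_iff_ne_zero.2 h0
  obtain ⟨p0, p1, -⟩ := posExt_fin_three i
  obtain ⟨v0, v1, v2, v3, v4⟩ := valExt_fin_three τ π i
  have h01 := apply_symm_lt_apply_symm hord (show (0 : Fin 3) < 1 by decide)
  have h12 := apply_symm_lt_apply_symm hord (show (1 : Fin 3) < 2 by decide)
  -- the first entry of `π` would lie in one of the shaded boxes `(0, b)`
  have hrow : ∀ b ≤ 3, ¬ (valExt τ π i b < π 0 + 1 ∧ π 0 + 1 < valExt τ π i (b + 1)) :=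
    fun b hb hv => hmesh 0 b (hR b hb) ⟨0, by simp [p0], by simp [p1, hpos], hv⟩
  have := hrow 0; have := hrow 1; have := hrow 2; have := hrow 3
  simp only [Nat.reduceAdd, v0, v1, v2, v3, v4] at *
  have := hne (τ.symm 0); have := hne (τ.symm 1); have := hne (τ.symm 2)
  have := (π 0).isLt
  omega

lemma not_isMeshOcc_of_sub_one_le_apply_zero (hR : ∀ b ≤ 3, (0, b) ∈ R) (hτ1 : τ 0 < τ 1)
    (hτ2 : τ 0 < τ 2) (hπ : n - 1 ≤ (π 0 : ℕ)) : ¬ IsMeshOcc τ R π i := by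
  intro h
  have h0 := h.apply_zero_eq_zero hR
  obtain ⟨hmono, hord, -⟩ := h
  have h1 : (π (i 0) : ℕ) < π (i 1) := (hord 0 1).2 hτ1
  have h2 : (π (i 0) : ℕ) < π (i 2) := (hord 0 2).2 hτ2
  have h12 : (π (i 1) : ℕ) ≠ π (i 2) := fun h =>
    (hmono (show (1 : Fin 3) < 2 by decide)).ne (π.injective (Fin.ext h))
  rw [h0] at h1 h2
  have := (π (i 1)).isLt; have := (π (i 2)).isLt
  omega

lemma isMeshOcc_of_apply_eq_add_apply (hR : ∀ a b, (a, b) ∈ R → a = 0 ∨ b = 1 ∨ b = 2)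
    (hi : StrictMono i) (h0 : i 0 = 0) (c : ℕ) (hv : ∀ a, (π (i a) : ℕ) = c + τ a) :
    IsMeshOcc τ R π i := by
  refine ⟨hi, fun a b => by simp only [Fin.lt_def, hv]; omega, ?_⟩
  rintro a b hab ⟨j, hj⟩
  obtain ⟨p0, p1, -⟩ := posExt_fin_three i
  obtain ⟨-, v1, v2, v3, -⟩ := valExt_fin_three τ π i
  have := hv (τ.symm 0); have := hv (τ.symm 1); have := hv (τ.symm 2)
  rcases hR a b hab with rfl | rfl | rfl <;>
    simp only [Nat.reduceAdd, p0, p1, v1, v2, v3, h0, Fin.val_zero, apply_symm_apply] at * <;> omega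

lemma isMeshOcc_of_top_consecutive
    (hR : ∀ a b, (a, b) ∈ R → a = 0 ∨ (a = 1 ∧ 1 ≤ b ∧ b ≤ 3) ∨ b = 2)
    (hi : StrictMono i) (h0 : i 0 = 0) (hτ : τ 0 = 0) (hcol : ∀ j < i 1, π j ≤ π 0)
    (hmid : π 0 < π (i (τ.symm 1)))
    (htop : (π (i (τ.symm 2)) : ℕ) = π (i (τ.symm 1)) + 1) :
    IsMeshOcc τ R π i := by
  have hτ0 : τ.symm 0 = 0 := by rw [symm_apply_eq, hτ]
  have hord := apply_lt_apply_iff_of_strictMono (π := π) (i := i) (τ := τ)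
    (strictMono_fin_three (by simpa [hτ0, h0] using hmid) (by simp [Fin.lt_def, htop]))
  refine ⟨hi, hord, ?_⟩
  rintro a b hab ⟨j, hj⟩
  obtain ⟨p0, p1, p2, -⟩ := posExt_fin_three i
  obtain ⟨-, v1, v2, v3, v4⟩ := valExt_fin_three τ π i
  have h12 := apply_symm_lt_apply_symm hord (show (1 : Fin 3) < 2 by decide)
  have hcolj : (i 1 : ℕ) ≤ j ∨ (π j : ℕ) ≤ π 0 := by
    rcases le_or_gt (i 1) j with h | h
    · exact .inl h
    · exact .inr (hcol j h)
  rcases hR a b hab with rfl | ⟨rfl, hb1, hb3⟩ | rfl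
  · simp only [zero_add, p0, p1, h0, Fin.val_zero] at hj; omega
  · interval_cases b <;> simp only [Nat.reduceAdd, p1, p2, v1, v2, v3, v4, hτ0, h0] at hj <;>
      omega
  · simp only [Nat.reduceAdd, v2, v3] at hj; omega

lemma exists_isMeshOcc_consecutive_of_apply_zero_add_two_le
    (hR : ∀ a b, (a, b) ∈ R → a = 0 ∨ b = 1 ∨ b = 2)
    (hπ : (π 0 : ℕ) + 2 ≤ n) :
    (∃ i, IsMeshOcc perm123 R π i) ∨ ∃ i, IsMeshOcc perm132 R π i := by
  set x : ℕ := (π 0 : ℕ)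
  set p := π.symm ⟨x + 1, by omega⟩
  set q := π.symm ⟨x + 2, by omega⟩
  have hp : (π p : ℕ) = x + 1 := by simp [p]
  have hq : (π q : ℕ) = x + 2 := by simp [q]
  have hp0 : 0 < p := Fin.pos_iff_ne_zero.2 fun h => by simp [h, x] at hp
  have hq0 : 0 < q := Fin.pos_iff_ne_zero.2 fun h => by simp [h, x] at hq
  rcases lt_or_gt_of_ne (show p ≠ q by rintro h; rw [h] at hp; omega) with hpq | hqp
  · exact .inl ⟨_, isMeshOcc_of_apply_eq_add_apply hR
      (strictMono_fin_three (f := ![0, p, q]) hp0 hpq)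
      rfl x fun a => by fin_cases a <;> simp [perm123, hp, hq, x]⟩
  · exact .inr ⟨_, isMeshOcc_of_apply_eq_add_apply hR
      (strictMono_fin_three (f := ![0, q, p]) hq0 hqp)
      rfl x fun a => by fin_cases a <;> simp [perm132, swap_apply_def, hp, hq, x]⟩

lemma exists_isMeshOcc_top_consecutive_of_apply_zero_add_two_le
    (hR : ∀ a b, (a, b) ∈ R → a = 0 ∨ (a = 1 ∧ 1 ≤ b ∧ b ≤ 3) ∨ b = 2)
    (hπ : (π 0 : ℕ) + 2 ≤ n) :
    (∃ i, IsMeshOcc perm123 R π i) ∨ ∃ i, IsMeshOcc perm132 R π i := by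
  obtain ⟨k, hk, hkmin⟩ := (Finset.univ.filter fun j => π 0 < π j).exists_min_image id
    ⟨π.symm ⟨π 0 + 1, by omega⟩,
      Finset.mem_filter.2 ⟨Finset.mem_univ _, Fin.lt_def.2 (by simp)⟩⟩
  simp only [Finset.mem_filter, Finset.mem_univ, true_and, id] at hk hkmin
  have hcol : ∀ j < k, π j ≤ π 0 := fun j hj => le_of_not_gt fun h => (hkmin j h).not_gt hj
  have hk0 : 0 < k := Fin.pos_iff_ne_zero.2 fun h => by simp [h] at hk
  have hafter : ∀ j, π 0 < π j → j ≠ k → k < j := fun j hj hne =>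
    lt_of_le_of_ne (hkmin j hj) hne.symm
  rw [Fin.lt_def] at hk
  rcases (show π 0 + 1 = (π k : ℕ) ∨ π 0 + 1 < (π k : ℕ) by omega) with hk1 | hk1
  · set q := π.symm ⟨π 0 + 2, by omega⟩
    have hq : (π q : ℕ) = π 0 + 2 := by simp [q]
    have hkq : k < q := hafter q (Fin.lt_def.2 (by omega)) fun h => by rw [h] at hq; omega
    have h1 : perm123.symm 1 = 1 := by decide
    have h2 : perm123.symm 2 = 2 := by decide
    refine .inl ⟨![0, k, q], isMeshOcc_of_top_consecutive hR
      (strictMono_fin_three (f := ![0, k, q]) hk0 hkq) rfl rfl hcol ?_ ?_⟩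
    · rw [h1]; exact Fin.lt_def.2 hk
    · rw [h1, h2]; exact (show (π q : ℕ) = π k + 1 by omega)
  · set q := π.symm ⟨π k - 1, by omega⟩
    have hq : (π q : ℕ) = π k - 1 := by simp [q]
    have hkq : k < q := hafter q (Fin.lt_def.2 (by omega)) fun h => by rw [h] at hq; omega
    have h1 : perm132.symm 1 = 2 := by decide
    have h2 : perm132.symm 2 = 1 := by decide
    refine .inr ⟨![0, k, q], isMeshOcc_of_top_consecutive hR
      (strictMono_fin_three (f := ![0, k, q]) hk0 hkq) rfl rfl hcol ?_ ?_⟩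
    · rw [h1]; exact Fin.lt_def.2 (show (π 0 : ℕ) < π q by omega)
    · rw [h1, h2]; exact (show (π k : ℕ) = π q + 1 by omega)

end LengthThree

lemma occ_eq_zero_iff {m n : ℕ} {τ : Perm (Fin m)} {R : Set (ℕ × ℕ)} {π : Perm (Fin n)} :
    occ τ R π = 0 ↔ ∀ i, ¬ IsMeshOcc τ R π i := by
  rw [occ, Finite.card_eq_zero_iff, isEmpty_subtype]

lemma occ_perm123_eq_zero_and_occ_perm132_eq_zero_iff {n : ℕ} {S : Set (ℕ × ℕ)}
    (hS : ∀ b ≤ 3, (0, b) ∈ S)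
    (hocc : ∀ π : Perm (Fin (n + 1)), (π 0 : ℕ) + 2 ≤ n →
      (∃ i, IsMeshOcc perm123 S π i) ∨ ∃ i, IsMeshOcc perm132 S π i)
    (π : Perm (Fin (n + 1))) :
    occ perm123 S π = 0 ∧ occ perm132 S π = 0 ↔ n - 1 ≤ (π 0 : ℕ) := by
  -- values are 0-based: `n - 1 ≤ π 0` says that `π 0` is one of the two largest values
  simp only [occ_eq_zero_iff]
  refine ⟨fun ⟨h123, h132⟩ => ?_, fun h => ⟨fun i => ?_, fun i => ?_⟩⟩
  · by_contra h
    rcases hocc π (by omega) with ⟨i, hi⟩ | ⟨i, hi⟩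
    exacts [h123 i hi, h132 i hi]
  · exact not_isMeshOcc_of_sub_one_le_apply_zero hS (by decide) (by decide) h
  · exact not_isMeshOcc_of_sub_one_le_apply_zero hS (by decide) (by decide) h

lemma card_perm_subtype_apply_zero {n : ℕ} (P : Fin (n + 1) → Prop) :
    Nat.card {π : Perm (Fin (n + 1)) // P (π 0)} = Nat.card {c // P c} * n ! := by
  have hfst : ∀ π : Perm (Fin (n + 1)), (Perm.decomposeFin π).1 = π 0 := fun π => by
    conv_rhs => rw [← Perm.decomposeFin.symm_apply_apply π]
    exact (Perm.decomposeFin_symm_apply_zero _ _).symm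
  rw [Nat.card_congr ((Perm.decomposeFin.subtypeEquiv fun π => by rw [hfst]).trans
    prodSubtypeFstEquivSubtypeProd), Nat.card_prod, Nat.card_perm, Nat.card_fin]

lemma card_subtype_sub_one_le_val {n : ℕ} (hn : 1 ≤ n) :
    Nat.card {c : Fin (n + 1) // n - 1 ≤ (c : ℕ)} = 2 := by
  simp_rw [← not_lt]
  rw [Nat.card_eq_fintype_card, Fintype.card_subtype_compl, Fintype.card_subtype,
    Fin.card_filter_val_lt, Fintype.card_fin]
  omega

theorem statement_7 :
    ∀ S ∈ ({S1, S5} : Set (Set (ℕ × ℕ))), ∀ n : ℕ, 2 ≤ n →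
      Nat.card {π : Equiv.Perm (Fin n) // occ perm123 S π = 0 ∧ occ perm132 S π = 0} =
        2 * Nat.factorial (n - 1) := by
  intro S hS n hn
  obtain ⟨n, rfl⟩ : ∃ m, n = m + 1 := ⟨n - 1, by omega⟩
  have hcol : ∀ b ≤ 3, (0, b) ∈ S := by
    rcases hS with rfl | rfl <;> intro b hb <;> interval_cases b <;> simp [S1, S5]
  have hocc : ∀ π : Perm (Fin (n + 1)), (π 0 : ℕ) + 2 ≤ n →
      (∃ i, IsMeshOcc perm123 S π i) ∨ ∃ i, IsMeshOcc perm132 S π i := by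
    rcases hS with rfl | rfl <;> refine fun π => ?_
    · refine exists_isMeshOcc_top_consecutive_of_apply_zero_add_two_le fun a b hab => ?_
      simp only [S1, Set.mem_insert_iff, Set.mem_singleton_iff, Prod.mk.injEq] at hab
      omega
    · refine exists_isMeshOcc_consecutive_of_apply_zero_add_two_le fun a b hab => ?_
      simp only [S5, Set.mem_insert_iff, Set.mem_singleton_iff, Prod.mk.injEq] at hab
      omega
  rw [Nat.card_congr (Equiv.subtypeEquivRight
      (occ_perm123_eq_zero_and_occ_perm132_eq_zero_iff hcol hocc)),
    card_perm_subtype_apply_zero fun c => n - 1 ≤ (c : ℕ),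
    card_subtype_sub_one_le_val (by omega), Nat.add_sub_cancel]
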